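/- Let Γ be an ordered abelian group and S a well-ordered subset of the nonnegative elements of Γ with order type α. Then the submonoid ⟨S⟩ generated by S is well-ordered with order type at most ω^(ω·α), where ω·α is the natural (Hessenberg) product. -/

import Mathlib

/-!
Induction on `α`. Write `x ∈ ⟨S⟩` as a sum of `k + 1` elements of `S` with largest summand `s`,
and let `β < α` and `τ` be the order types of `S ∩ Iio s` and `S ∩ Ici s`, so `β + τ ≤ α`.
An element of `⟨S⟩` below `x` has at most `k` summands `≥ s`, hence lies in
`⟨S ∩ Iio s⟩ + k • ({0} ∪ (S ∩ Ici s))`. The bound `ot (A + B) ≤ ω ^ (e ♯ f)` for `ot A ≤ ω ^ e`,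
`ot B ≤ ω ^ f` (by induction on `(e, f)`, since an element below `a + b` in `A + B` is some
`c + d` with `c < a` or `d < b`) bounds the order type of this set by
`ω ^ (ω ⨳ β ♯ u)` with `u = (τ + 1) ⨳ k < ω ^ (log τ + 1)`. Finally
`ω ⨳ β ♯ u < ω ⨳ (β + ω ^ log τ) ≤ ω ⨳ α`, so every element of `⟨S⟩` has rank below
`ω ^ (ω ⨳ α)`.
-/

noncomputable section

namespace Ordinal

/-- Natural (Hessenberg) addition of ordinals (removed from Mathlib; old definition). -/
noncomputable def nadd : Ordinal.{u} → Ordinal.{u} → Ordinal.{u}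
  | a, b =>
    max (⨆ x : Set.Iio a, Order.succ (nadd x.1 b)) (⨆ x : Set.Iio b, Order.succ (nadd a x.1))
termination_by a b => (a, b)
decreasing_by all_goals cases x; decreasing_tactic

/-- Natural (Hessenberg) multiplication of ordinals (removed from Mathlib; old definition). -/
noncomputable def nmul : Ordinal.{u} → Ordinal.{u} → Ordinal.{u}
  | a, b => sInf {c | ∀ a' < a, ∀ b' < b, nadd (nmul a' b) (nmul a b') < nadd c (nmul a' b')}
termination_by a b => (a, b)

end Ordinal

namespace NaturalOps

scoped infixl:65 " ♯ " => Ordinal.nadd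

scoped infixl:70 " ⨳ " => Ordinal.nmul

end NaturalOps

/-- Order type of a well-ordered subset of a linear order. -/
noncomputable def orderTypeOf {Γ : Type*} [LinearOrder Γ] (A : Set Γ) (h : A.IsWF) : Ordinal :=
  letI : WellFoundedLT A := ⟨h⟩
  Ordinal.type ((· < ·) : A → A → Prop)

/-- Order type of a reverse well-ordered subset of a linear order. -/
noncomputable def revOrderTypeOf {Γ : Type*} [LinearOrder Γ] (A : Set Γ)
    (h : A.WellFoundedOn (· > ·)) : Ordinal :=
  letI : WellFoundedGT A := ⟨h⟩
  Ordinal.type ((· > ·) : A → A → Prop)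

namespace Ordinal

open NaturalOps

theorem nadd_def (a b : Ordinal) :
    a ♯ b = max (⨆ x : Set.Iio a, Order.succ (x.1 ♯ b))
      (⨆ x : Set.Iio b, Order.succ (a ♯ x.1)) := by
  rw [nadd]

theorem lt_nadd_iff {a b c : Ordinal} :
    a < b ♯ c ↔ (∃ b' < b, a ≤ b' ♯ c) ∨ ∃ c' < c, a ≤ b ♯ c' := by
  rw [nadd_def, lt_max_iff, Ordinal.lt_iSup_iff, Ordinal.lt_iSup_iff]
  simp

theorem nadd_le_iff {a b c : Ordinal} :
    b ♯ c ≤ a ↔ (∀ b' < b, b' ♯ c < a) ∧ ∀ c' < c, b ♯ c' < a := by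
  rw [nadd_def, max_le_iff, Ordinal.iSup_le_iff, Ordinal.iSup_le_iff]
  simp

theorem nadd_lt_nadd_left {b c : Ordinal} (h : b < c) (a : Ordinal) : a ♯ b < a ♯ c :=
  lt_nadd_iff.2 (Or.inr ⟨b, h, le_rfl⟩)

theorem nadd_lt_nadd_right {b c : Ordinal} (h : b < c) (a : Ordinal) : b ♯ a < c ♯ a :=
  lt_nadd_iff.2 (Or.inl ⟨b, h, le_rfl⟩)

theorem nadd_le_nadd_left {b c : Ordinal} (h : b ≤ c) (a : Ordinal) : a ♯ b ≤ a ♯ c := by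
  rcases h.lt_or_eq with h | rfl
  exacts [(nadd_lt_nadd_left h a).le, le_rfl]

theorem nadd_le_nadd_right {b c : Ordinal} (h : b ≤ c) (a : Ordinal) : b ♯ a ≤ c ♯ a := by
  rcases h.lt_or_eq with h | rfl
  exacts [(nadd_lt_nadd_right h a).le, le_rfl]

theorem nadd_lt_nadd_of_lt_of_le {a b c d : Ordinal} (h₁ : a < b) (h₂ : c ≤ d) :
    a ♯ c < b ♯ d :=
  (nadd_le_nadd_left h₂ a).trans_lt (nadd_lt_nadd_right h₁ d)

theorem nadd_lt_nadd_of_le_of_lt {a b c d : Ordinal} (h₁ : a ≤ b) (h₂ : c < d) :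
    a ♯ c < b ♯ d :=
  (nadd_le_nadd_right h₁ c).trans_lt (nadd_lt_nadd_left h₂ b)

theorem nadd_lt_nadd_iff_right {a b c : Ordinal} : b ♯ a < c ♯ a ↔ b < c :=
  ⟨fun h => lt_of_not_ge fun h' => (nadd_le_nadd_right h' a).not_gt h,
    fun h => nadd_lt_nadd_right h a⟩

theorem nadd_comm (a b : Ordinal) : a ♯ b = b ♯ a := by
  induction a using WellFoundedLT.induction generalizing b with
  | ind a IHa =>
  induction b using WellFoundedLT.induction with
  | ind b IHb =>
  rw [nadd_def, nadd_def b a, max_comm]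
  congr 1
  · congr 1; funext x; rw [IHb x.1 x.2]
  · congr 1; funext x; rw [IHa x.1 x.2 b]

@[simp] theorem nadd_zero (a : Ordinal) : a ♯ 0 = a := by
  induction a using WellFoundedLT.induction with
  | ind a IH =>
  refine le_antisymm (nadd_le_iff.2 ⟨fun a' ha => by rw [IH a' ha]; exact ha,
    fun c hc => absurd hc (not_lt_of_ge zero_le)⟩) ?_
  refine le_of_forall_lt fun c hc => ?_
  rw [← IH c hc]
  exact nadd_lt_nadd_right hc 0

@[simp] theorem zero_nadd (a : Ordinal) : 0 ♯ a = a := by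
  rw [nadd_comm, nadd_zero]

theorem nadd_assoc (a b c : Ordinal) : a ♯ b ♯ c = a ♯ (b ♯ c) := by
  induction a using WellFoundedLT.induction generalizing b c with
  | ind a IHa =>
  induction b using WellFoundedLT.induction generalizing c with
  | ind b IHb =>
  induction c using WellFoundedLT.induction with
  | ind c IHc =>
  refine le_antisymm (nadd_le_iff.2 ⟨fun d hd => ?_, fun c' hc => ?_⟩)
    (nadd_le_iff.2 ⟨fun a' ha => ?_, fun d hd => ?_⟩)
  · rcases lt_nadd_iff.1 hd with ⟨a', ha, hd⟩ | ⟨b', hb, hd⟩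
    · refine (nadd_le_nadd_right hd c).trans_lt ?_
      rw [IHa a' ha]
      exact nadd_lt_nadd_right ha _
    · refine (nadd_le_nadd_right hd c).trans_lt ?_
      rw [IHb b' hb]
      exact nadd_lt_nadd_left (nadd_lt_nadd_right hb c) a
  · rw [IHc c' hc]
    exact nadd_lt_nadd_left (nadd_lt_nadd_left hc b) a
  · rw [← IHa a' ha]
    exact nadd_lt_nadd_right (nadd_lt_nadd_right ha b) c
  · rcases lt_nadd_iff.1 hd with ⟨b', hb, hd⟩ | ⟨c', hc, hd⟩
    · refine (nadd_le_nadd_left hd a).trans_lt ?_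
      rw [← IHb b' hb]
      exact nadd_lt_nadd_right (nadd_lt_nadd_left hb a) c
    · refine (nadd_le_nadd_left hd a).trans_lt ?_
      rw [← IHc c' hc]
      exact nadd_lt_nadd_left hc _

instance : Std.Associative Ordinal.nadd := ⟨nadd_assoc⟩

instance : Std.Commutative Ordinal.nadd := ⟨nadd_comm⟩

theorem le_self_nadd {a b : Ordinal} : a ≤ a ♯ b := by
  simpa using nadd_le_nadd_left (zero_le : (0 : Ordinal) ≤ b) a

theorem nadd_one (a : Ordinal) : a ♯ 1 = Order.succ a := by
  induction a using WellFoundedLT.induction with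
  | ind a IH =>
  refine le_antisymm (nadd_le_iff.2 ⟨fun a' ha => ?_, fun c hc => ?_⟩) ?_
  · rw [IH a' ha]; exact Order.succ_lt_succ ha
  · rw [Order.lt_one_iff.1 hc, nadd_zero]; exact Order.lt_succ a
  · refine Order.succ_le_of_lt ?_
    simpa using nadd_lt_nadd_left zero_lt_one a

theorem one_nadd (a : Ordinal) : 1 ♯ a = Order.succ a := by
  rw [nadd_comm, nadd_one]

theorem nadd_add_le_add_nadd (x y z : Ordinal) : (x ♯ y) + z ≤ (x + z) ♯ y := by
  induction z using WellFoundedLT.induction with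
  | ind z IH =>
  rcases zero_or_succ_or_isSuccLimit z with rfl | ⟨z, rfl⟩ | hz
  · simp
  · simp only [Order.succ_eq_add_one, ← add_assoc]
    exact Order.add_one_le_of_lt
      ((IH z (Order.lt_succ z)).trans_lt (nadd_lt_nadd_right (lt_add_one _) y))
  · exact (add_le_iff_of_isSuccLimit hz).2 fun δ hδ =>
      (IH δ hδ).trans (nadd_le_nadd_right (add_le_add_right hδ.le x) y)

theorem add_le_nadd (a b : Ordinal) : a + b ≤ a ♯ b := by
  simpa [nadd_comm b] using nadd_add_le_add_nadd 0 a b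

theorem nmul_def (a b : Ordinal) : a ⨳ b =
    sInf {c | ∀ a' < a, ∀ b' < b, a' ⨳ b ♯ a ⨳ b' < c ♯ a' ⨳ b'} := by
  rw [nmul]

theorem nmul_nonempty (a b : Ordinal) :
    {c : Ordinal | ∀ a' < a, ∀ b' < b, a' ⨳ b ♯ a ⨳ b' < c ♯ a' ⨳ b'}.Nonempty := by
  refine ⟨⨆ p : Set.Iio a × Set.Iio b, (p.1.1 ⨳ b ♯ a ⨳ p.2.1 + 1),
    fun a' ha b' hb => ?_⟩
  exact (Ordinal.lt_iSup_add_one (fun p : Set.Iio a × Set.Iio b => p.1.1 ⨳ b ♯ a ⨳ p.2.1)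
    (⟨a', ha⟩, ⟨b', hb⟩)).trans_le le_self_nadd

theorem nmul_nadd_lt {a b a' b' : Ordinal} (ha : a' < a) (hb : b' < b) :
    a' ⨳ b ♯ a ⨳ b' < a ⨳ b ♯ a' ⨳ b' := by
  rw [nmul_def a b]
  exact csInf_mem (nmul_nonempty a b) a' ha b' hb

theorem nmul_nadd_le {a b a' b' : Ordinal} (ha : a' ≤ a) (hb : b' ≤ b) :
    a' ⨳ b ♯ a ⨳ b' ≤ a ⨳ b ♯ a' ⨳ b' := by
  rcases ha.lt_or_eq with ha | rfl
  · rcases hb.lt_or_eq with hb | rfl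
    · exact (nmul_nadd_lt ha hb).le
    · rw [nadd_comm]
  · exact le_rfl

theorem lt_nmul_iff {a b c : Ordinal} :
    c < a ⨳ b ↔ ∃ a' < a, ∃ b' < b, c ♯ a' ⨳ b' ≤ a' ⨳ b ♯ a ⨳ b' := by
  refine ⟨fun h => ?_, ?_⟩
  · rw [nmul_def] at h
    simpa using notMem_of_lt_csInf h (OrderBot.bddBelow _)
  · rintro ⟨a', ha, b', hb, h⟩
    have := h.trans_lt (nmul_nadd_lt ha hb)
    rwa [nadd_lt_nadd_iff_right] at this

theorem nmul_le_iff {a b c : Ordinal} :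
    a ⨳ b ≤ c ↔ ∀ a' < a, ∀ b' < b, a' ⨳ b ♯ a ⨳ b' < c ♯ a' ⨳ b' := by
  rw [← not_iff_not]
  push Not
  exact lt_nmul_iff

theorem nmul_comm (a b : Ordinal) : a ⨳ b = b ⨳ a := by
  induction a using WellFoundedLT.induction generalizing b with
  | ind a IHa =>
  induction b using WellFoundedLT.induction with
  | ind b IHb =>
  rw [nmul_def, nmul_def b a]
  congr 1
  ext x
  constructor <;> intro H c hc d hd
  · have := H d hd c hc
    rwa [IHa d hd b, IHb c hc, IHa d hd c, nadd_comm (b ⨳ d)] at this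
  · have := H d hd c hc
    rwa [← IHb d hd, ← IHa c hc b, ← IHa c hc d, nadd_comm (a ⨳ d)] at this

@[simp] theorem nmul_zero (a : Ordinal) : a ⨳ 0 = 0 :=
  le_antisymm (nmul_le_iff.2 fun _ _ _ hb => absurd hb (not_lt_of_ge zero_le)) zero_le

@[simp] theorem zero_nmul (a : Ordinal) : 0 ⨳ a = 0 := by
  rw [nmul_comm, nmul_zero]

theorem nmul_one (a : Ordinal) : a ⨳ 1 = a := by
  induction a using WellFoundedLT.induction with
  | ind a IH =>
  refine le_antisymm (nmul_le_iff.2 fun a' ha b' hb => ?_) (le_of_forall_lt fun c hc => ?_)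
  · rw [Order.lt_one_iff.1 hb]
    simpa [IH a' ha] using ha
  · exact lt_nmul_iff.2 ⟨c, hc, 0, zero_lt_one, by simp [IH c hc]⟩

theorem nmul_lt_nmul_of_pos_left {a b c : Ordinal} (h₁ : a < b) (h₂ : 0 < c) :
    c ⨳ a < c ⨳ b :=
  lt_nmul_iff.2 ⟨0, h₂, a, h₁, by simp⟩

theorem nmul_le_nmul_left {a b : Ordinal} (h : a ≤ b) (c : Ordinal) : c ⨳ a ≤ c ⨳ b := by
  rcases h.lt_or_eq with h | rfl
  · rcases eq_or_ne c 0 with rfl | hc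
    · simp
    · exact (nmul_lt_nmul_of_pos_left h (pos_iff_ne_zero.2 hc)).le
  · exact le_rfl

theorem nmul_nadd (a b c : Ordinal) : a ⨳ (b ♯ c) = a ⨳ b ♯ a ⨳ c := by
  induction a using WellFoundedLT.induction generalizing b c with
  | ind a IHa =>
  induction b using WellFoundedLT.induction generalizing c with
  | ind b IHb =>
  induction c using WellFoundedLT.induction with
  | ind c IHc =>
  refine le_antisymm (nmul_le_iff.2 fun a' ha d hd => ?_)
    (nadd_le_iff.2 ⟨fun d hd => ?_, fun d hd => ?_⟩)
  · rw [IHa a' ha]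
    rcases lt_nadd_iff.1 hd with ⟨b', hb, hd⟩ | ⟨c', hc, hd⟩
    · have := nadd_lt_nadd_of_lt_of_le (nmul_nadd_lt ha hb) (nmul_nadd_le ha.le hd)
      rw [IHa a' ha, IHb b' hb] at this
      have key : (a' ⨳ b ♯ a' ⨳ c ♯ a ⨳ d) ♯ (a ⨳ b' ♯ a' ⨳ b') <
          (a ⨳ b ♯ a ⨳ c ♯ a' ⨳ d) ♯ (a ⨳ b' ♯ a' ⨳ b') := by
        convert this using 1 <;> ac_rfl
      exact nadd_lt_nadd_iff_right.1 key
    · have := nadd_lt_nadd_of_lt_of_le (nmul_nadd_lt ha hc) (nmul_nadd_le ha.le hd)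
      rw [IHa a' ha, IHc c' hc] at this
      have key : (a' ⨳ b ♯ a' ⨳ c ♯ a ⨳ d) ♯ (a ⨳ c' ♯ a' ⨳ c') <
          (a ⨳ b ♯ a ⨳ c ♯ a' ⨳ d) ♯ (a ⨳ c' ♯ a' ⨳ c') := by
        convert this using 1 <;> ac_rfl
      exact nadd_lt_nadd_iff_right.1 key
  · rcases lt_nmul_iff.1 hd with ⟨a', ha, b', hb, hd⟩
    refine lt_nmul_iff.2 ⟨a', ha, b' ♯ c, nadd_lt_nadd_right hb c, ?_⟩
    rw [IHa a' ha, IHa a' ha, IHb b' hb]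
    have key := nadd_le_nadd_right hd (a ⨳ c ♯ a' ⨳ c)
    convert key using 1 <;> ac_rfl
  · rcases lt_nmul_iff.1 hd with ⟨a', ha, c', hc, hd⟩
    refine lt_nmul_iff.2 ⟨a', ha, b ♯ c', nadd_lt_nadd_left hc b, ?_⟩
    rw [IHa a' ha, IHa a' ha, IHc c' hc]
    have key := nadd_le_nadd_right hd (a ⨳ b ♯ a' ⨳ b)
    convert key using 1 <;> ac_rfl

theorem nmul_add_one (a b : Ordinal) : a ⨳ (b + 1) = a ⨳ b ♯ a := by
  rw [← Order.succ_eq_add_one, ← nadd_one, nmul_nadd, nmul_one]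

theorem nmul_natCast_add_mul_le (a b : Ordinal) (n : ℕ) : a ⨳ n + b * n ≤ (a + b) ⨳ n := by
  induction n with
  | zero => simp
  | succ n IH =>
    push_cast
    rw [nmul_add_one, nmul_add_one, mul_add_one, ← add_assoc]
    calc (a ⨳ n ♯ a) + b * n + b ≤ ((a ⨳ n + b * n) ♯ a) + b := by
          gcongr; exact nadd_add_le_add_nadd _ _ _
      _ ≤ ((a + b) ⨳ n ♯ a) + b := by gcongr; exact nadd_le_nadd_right IH a
      _ ≤ (a + b) ♯ (a + b) ⨳ n := by
          rw [nadd_comm]; exact nadd_add_le_add_nadd _ _ _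
      _ = (a + b) ⨳ n ♯ (a + b) := nadd_comm _ _

theorem nmul_natCast_lt {a c : Ordinal} (hc : IsPrincipal (· ♯ ·) c) (ha : a < c) (n : ℕ) :
    a ⨳ n < c := by
  induction n with
  | zero => simpa using zero_le.trans_lt ha
  | succ n IH =>
    push_cast
    rw [nmul_add_one]
    exact hc IH ha

/- The next four lemmas assume that `ω ^ T` is closed under `♯`: they are the induction step of
`isPrincipal_nadd_omega0_opow`, which removes this assumption. -/
theorem omega0_opow_mul_nadd_of_lt {T : Ordinal} (hT : IsPrincipal (· ♯ ·) (ω ^ T))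
    (q : Ordinal) {r : Ordinal} (hr : r < ω ^ T) :
    ω ^ T * q ♯ r = ω ^ T * q + r := by
  have hω : ω ^ T ≠ 0 := opow_ne_zero T omega0_ne_zero
  induction q using WellFoundedLT.induction generalizing r with
  | ind q IHq =>
  induction r using WellFoundedLT.induction with
  | ind r IHr =>
  refine le_antisymm (nadd_le_iff.2 ⟨fun x hx => ?_, fun r' hr' => ?_⟩) (add_le_nadd _ _)
  · have hxq : x / ω ^ T < q := (lt_mul_iff_div_lt hω).1 hx
    have hxr : x % ω ^ T < ω ^ T := mod_lt x hω
    calc x ♯ r = (ω ^ T * (x / ω ^ T) ♯ x % ω ^ T) ♯ r := by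
          rw [IHq _ hxq hxr, div_add_mod]
      _ = ω ^ T * (x / ω ^ T) + (x % ω ^ T ♯ r) := by rw [nadd_assoc, IHq _ hxq (hT hxr hr)]
      _ < ω ^ T * (x / ω ^ T) + ω ^ T := add_lt_add_right (hT hxr hr) _
      _ = ω ^ T * (x / ω ^ T + 1) := (mul_add_one _ _).symm
      _ ≤ ω ^ T * q + r := (mul_le_mul_right (Order.add_one_le_of_lt hxq) _).trans le_self_add
  · rw [IHr r' hr' (hr'.trans hr)]
    exact add_lt_add_right hr' _

theorem omega0_opow_mul_nadd_omega0_opow {T : Ordinal} (hT : IsPrincipal (· ♯ ·) (ω ^ T))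
    (c : Ordinal) :
    ω ^ T * c ♯ ω ^ T = ω ^ T * (c + 1) := by
  have hω : ω ^ T ≠ 0 := opow_ne_zero T omega0_ne_zero
  induction c using WellFoundedLT.induction with
  | ind c IH =>
  refine le_antisymm (nadd_le_iff.2 ⟨fun x hx => ?_, fun y hy => ?_⟩)
    ((mul_add_one _ c).trans_le (add_le_nadd _ _))
  · have hxc : x / ω ^ T < c := (lt_mul_iff_div_lt hω).1 hx
    have hxr : x % ω ^ T < ω ^ T := mod_lt x hω
    calc x ♯ ω ^ T = (ω ^ T * (x / ω ^ T) ♯ ω ^ T) ♯ x % ω ^ T := by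
          conv_lhs => rw [← div_add_mod x (ω ^ T), ← omega0_opow_mul_nadd_of_lt hT _ hxr]
          ac_rfl
      _ = ω ^ T * (x / ω ^ T + 1) + x % ω ^ T := by
          rw [IH _ hxc, omega0_opow_mul_nadd_of_lt hT _ hxr]
      _ < ω ^ T * (x / ω ^ T + 1) + ω ^ T := add_lt_add_right hxr _
      _ = ω ^ T * (x / ω ^ T + 1 + 1) := (mul_add_one _ _).symm
      _ ≤ ω ^ T * (c + 1) := by grw [Order.add_one_le_of_lt hxc]
  · rw [omega0_opow_mul_nadd_of_lt hT _ hy, mul_add_one]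
    exact add_lt_add_right hy _

theorem omega0_opow_mul_nadd_omega0_opow_mul_natCast {T : Ordinal}
    (hT : IsPrincipal (· ♯ ·) (ω ^ T)) (q : Ordinal) (d : ℕ) :
    ω ^ T * q ♯ ω ^ T * d = ω ^ T * (q + d) := by
  induction d with
  | zero => simp
  | succ d IH =>
    rw [Nat.cast_succ, ← omega0_opow_mul_nadd_omega0_opow hT, ← nadd_assoc, IH,
      omega0_opow_mul_nadd_omega0_opow hT, add_assoc]

theorem nadd_lt_add_omega0_opow_mul {T : Ordinal} (hT : IsPrincipal (· ♯ ·) (ω ^ T))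
    (x : Ordinal) {δ : Ordinal} {n : ℕ} (hδ : δ < ω ^ T * n) : x ♯ δ < x + ω ^ T * n := by
  have hω : ω ^ T ≠ 0 := opow_ne_zero T omega0_ne_zero
  have hδn : δ / ω ^ T < n := (lt_mul_iff_div_lt hω).1 hδ
  obtain ⟨d, hd⟩ := lt_omega0.1 (hδn.trans (natCast_lt_omega0 n))
  rw [hd, Nat.cast_lt] at hδn
  have hxr : x % ω ^ T < ω ^ T := mod_lt x hω
  have hδr : δ % ω ^ T < ω ^ T := mod_lt δ hω
  calc x ♯ δ = (ω ^ T * (x / ω ^ T) ♯ ω ^ T * d) ♯ (x % ω ^ T ♯ δ % ω ^ T) := by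
        conv_lhs => rw [← div_add_mod x (ω ^ T), ← div_add_mod δ (ω ^ T), hd,
          ← omega0_opow_mul_nadd_of_lt hT _ hxr, ← omega0_opow_mul_nadd_of_lt hT _ hδr]
        ac_rfl
    _ = ω ^ T * (x / ω ^ T + d) + (x % ω ^ T ♯ δ % ω ^ T) := by
        rw [omega0_opow_mul_nadd_omega0_opow_mul_natCast hT,
          omega0_opow_mul_nadd_of_lt hT _ (hT hxr hδr)]
    _ < ω ^ T * (x / ω ^ T + d) + ω ^ T := add_lt_add_right (hT hxr hδr) _
    _ = ω ^ T * (x / ω ^ T + (d + 1 : ℕ)) := by push_cast; rw [← add_assoc, mul_add_one]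
    _ ≤ ω ^ T * (x / ω ^ T) + ω ^ T * n := by
        rw [← mul_add]; gcongr; exact_mod_cast hδn
    _ ≤ x + ω ^ T * n := by grw [mul_div_le x (ω ^ T)]

theorem isPrincipal_nadd_omega0_opow (e : Ordinal) : IsPrincipal (· ♯ ·) (ω ^ e) := by
  induction e using WellFoundedLT.induction with
  | ind e IH =>
  intro a b ha hb
  rcases eq_or_ne e 0 with rfl | he
  · rw [opow_zero, Order.lt_one_iff] at ha hb
    simp [ha, hb]
  obtain ⟨c, hc, n, hbn⟩ := (lt_omega0_opow he).1 hb
  exact (nadd_lt_add_omega0_opow_mul (IH c hc) a hbn).trans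
    (isPrincipal_add_omega0_opow e ha (opow_mul_lt_opow (natCast_lt_omega0 n) hc))

theorem omega0_nmul_nadd_lt {β T u : Ordinal} (hu : u < ω ^ Order.succ T) :
    ω ⨳ β ♯ u < ω ⨳ (β + ω ^ T) := by
  obtain ⟨n, hn⟩ := lt_omega0_opow_succ.1 hu
  refine lt_nmul_iff.2
    ⟨n, natCast_lt_omega0 n, β, lt_add_of_pos_right β (opow_pos T omega0_pos), ?_⟩
  calc ω ⨳ β ♯ u ♯ n ⨳ β = ω ⨳ β ♯ (β ⨳ n ♯ u) := by
        rw [nmul_comm (n : Ordinal)]; ac_rfl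
    _ ≤ ω ⨳ β ♯ (β ⨳ n + ω ^ T * n) :=
        nadd_le_nadd_left (nadd_lt_add_omega0_opow_mul (isPrincipal_nadd_omega0_opow T) _ hn).le _
    _ ≤ ω ⨳ β ♯ (β + ω ^ T) ⨳ n := nadd_le_nadd_left (nmul_natCast_add_mul_le β _ n) _
    _ = n ⨳ (β + ω ^ T) ♯ ω ⨳ β := by rw [nadd_comm, nmul_comm (β + ω ^ T)]

theorem omega0_nmul_nadd_succ_nmul_lt {α β τ : Ordinal} (hτ : τ ≠ 0) (h : β + τ ≤ α)
    (k : ℕ) :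
    ω ⨳ β ♯ Order.succ τ ⨳ k < ω ⨳ α := by
  have hsucc : Order.succ τ < ω ^ Order.succ (log ω τ) :=
    (isSuccLimit_opow_left isSuccLimit_omega0 (zero_le.trans_lt (Order.lt_succ _)).ne').succ_lt
      (lt_opow_succ_log_self one_lt_omega0 τ)
  refine (omega0_nmul_nadd_lt (nmul_natCast_lt (isPrincipal_nadd_omega0_opow _) hsucc k)).trans_le
    (nmul_le_nmul_left ?_ ω)
  exact (add_le_add_right (opow_log_le_self ω hτ) β).trans h

end Ordinal

section OrderType

open Set

variable {Γ : Type*} [LinearOrder Γ] {A B : Set Γ}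

theorem orderTypeOf_congr (hA : A.IsWF) (hB : B.IsWF) (h : A = B) :
    orderTypeOf A hA = orderTypeOf B hB := by
  subst h; rfl

theorem orderTypeOf_mono (hA : A.IsWF) (hB : B.IsWF) (h : A ⊆ B) :
    orderTypeOf A hA ≤ orderTypeOf B hB := by
  have : WellFoundedLT A := ⟨hA⟩
  have : WellFoundedLT B := ⟨hB⟩
  exact Ordinal.type_le_iff'.2 ⟨⟨⟨inclusion h, inclusion_injective h⟩, Iff.rfl⟩⟩

theorem orderTypeOf_eq_zero_iff (hA : A.IsWF) : orderTypeOf A hA = 0 ↔ A = ∅ := by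
  have : WellFoundedLT A := ⟨hA⟩
  rw [orderTypeOf, Ordinal.type_eq_zero_iff_isEmpty, isEmpty_coe_sort]

theorem orderTypeOf_empty : orderTypeOf (∅ : Set Γ) isWF_empty = 0 :=
  (orderTypeOf_eq_zero_iff _).2 rfl

theorem orderTypeOf_singleton (a : Γ) : orderTypeOf {a} isWF_singleton = 1 := by
  have : WellFoundedLT ({a} : Set Γ) := ⟨isWF_singleton⟩
  exact Ordinal.type_eq_one_iff_unique.2 ⟨uniqueSingleton a⟩

private theorem inter_Iio_inter_Iio_of_le {x z : Γ} (h : x ≤ z) :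
    A ∩ Iio z ∩ Iio x = A ∩ Iio x := by
  rw [inter_assoc, Iio_inter_Iio, min_eq_right h]

private theorem orderTypeOf_inter_Iio_eq_typein (hA : A.IsWF) {x : Γ} (hx : x ∈ A)
    (inst : IsWellOrder A (· < ·)) :
    orderTypeOf (A ∩ Iio x) (hA.mono inter_subset_left) =
      @Ordinal.typein A (· < ·) inst ⟨x, hx⟩ := by
  have : WellFoundedLT A := ⟨hA⟩
  have : WellFoundedLT (A ∩ Iio x : Set Γ) := ⟨hA.mono inter_subset_left⟩
  rw [← Ordinal.type_Iio_lt]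
  exact Ordinal.type_eq.2 ⟨{
    toFun := fun a => ⟨⟨a.1, a.2.1⟩, a.2.2⟩
    invFun := fun b => ⟨b.1.1, b.1.2, b.2⟩
    left_inv := fun _ => rfl
    right_inv := fun _ => rfl
    map_rel_iff' := Iff.rfl }⟩

theorem orderTypeOf_inter_Iio_lt (hA : A.IsWF) {x : Γ} (hx : x ∈ A) :
    orderTypeOf (A ∩ Iio x) (hA.mono inter_subset_left) < orderTypeOf A hA := by
  have : WellFoundedLT A := ⟨hA⟩
  rw [orderTypeOf_inter_Iio_eq_typein hA hx inferInstance]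
  exact Ordinal.typein_lt_type _ _

theorem exists_orderTypeOf_inter_Iio_eq (hA : A.IsWF) {c : Ordinal} (hc : c < orderTypeOf A hA) :
    ∃ x ∈ A, orderTypeOf (A ∩ Iio x) (hA.mono inter_subset_left) = c := by
  have : WellFoundedLT A := ⟨hA⟩
  obtain ⟨⟨x, hx⟩, rfl⟩ := Ordinal.typein_surj (· < ·) hc
  exact ⟨x, hx, orderTypeOf_inter_Iio_eq_typein hA hx inferInstance⟩

theorem orderTypeOf_le_of_forall_inter_Iio_lt (hA : A.IsWF) {c : Ordinal}
    (h : ∀ x ∈ A, orderTypeOf (A ∩ Iio x) (hA.mono inter_subset_left) < c) :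
    orderTypeOf A hA ≤ c := by
  by_contra! hc
  obtain ⟨x, hx, hxc⟩ := exists_orderTypeOf_inter_Iio_eq hA hc
  exact (h x hx).ne hxc

theorem orderTypeOf_inter_Iio_le_of_le (hA : A.IsWF) {x z : Γ} (h : x ≤ z) :
    orderTypeOf (A ∩ Iio x) (hA.mono inter_subset_left) ≤
      orderTypeOf (A ∩ Iio z) (hA.mono inter_subset_left) :=
  orderTypeOf_mono _ _ (inter_subset_inter_right A (Iio_subset_Iio h))

theorem orderTypeOf_inter_Iio_lt_of_lt (hA : A.IsWF) {x z : Γ} (hx : x ∈ A) (h : x < z) :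
    orderTypeOf (A ∩ Iio x) (hA.mono inter_subset_left) <
      orderTypeOf (A ∩ Iio z) (hA.mono inter_subset_left) := by
  have := orderTypeOf_inter_Iio_lt (hA.mono inter_subset_left)
    (show x ∈ A ∩ Iio z from ⟨hx, h⟩)
  rwa [orderTypeOf_congr _ (hA.mono inter_subset_left) (inter_Iio_inter_Iio_of_le h.le)] at this

theorem orderTypeOf_le_of_strictMonoOn (hA : A.IsWF) {f : Γ → Ordinal} (hf : StrictMonoOn f A)
    {c : Ordinal} (hc : ∀ x ∈ A, f x < c) : orderTypeOf A hA ≤ c := by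
  have hrank : ∀ x ∈ A, orderTypeOf (A ∩ Iio x) (hA.mono inter_subset_left) ≤ f x := by
    refine fun x hx => hA.induction (P := fun y =>
      orderTypeOf (A ∩ Iio y) (hA.mono inter_subset_left) ≤ f y) hx fun y hy IH => ?_
    refine orderTypeOf_le_of_forall_inter_Iio_lt _ fun z hz => ?_
    rw [orderTypeOf_congr _ (hA.mono inter_subset_left) (inter_Iio_inter_Iio_of_le hz.2.le)]
    exact (IH z hz.1 hz.2).trans_lt (hf hz.1 hy hz.2)
  exact orderTypeOf_le_of_forall_inter_Iio_lt hA fun x hx => (hrank x hx).trans_lt (hc x hx)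

open NaturalOps in
theorem orderTypeOf_union_le (hA : A.IsWF) (hB : B.IsWF) :
    orderTypeOf (A ∪ B) (hA.union hB) ≤ orderTypeOf A hA ♯ orderTypeOf B hB := by
  refine orderTypeOf_le_of_strictMonoOn _ (f := fun z =>
    orderTypeOf (A ∩ Iio z) (hA.mono inter_subset_left) ♯
      orderTypeOf (B ∩ Iio z) (hB.mono inter_subset_left)) ?_ ?_
  · rintro x (hx | hx) z - hxz
    · exact Ordinal.nadd_lt_nadd_of_lt_of_le (orderTypeOf_inter_Iio_lt_of_lt hA hx hxz)
        (orderTypeOf_inter_Iio_le_of_le hB hxz.le)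
    · exact Ordinal.nadd_lt_nadd_of_le_of_lt (orderTypeOf_inter_Iio_le_of_le hA hxz.le)
        (orderTypeOf_inter_Iio_lt_of_lt hB hx hxz)
  · rintro x (hx | hx)
    · exact Ordinal.nadd_lt_nadd_of_lt_of_le (orderTypeOf_inter_Iio_lt hA hx)
        (orderTypeOf_mono _ _ inter_subset_left)
    · exact Ordinal.nadd_lt_nadd_of_le_of_lt (orderTypeOf_mono _ _ inter_subset_left)
        (orderTypeOf_inter_Iio_lt hB hx)

theorem orderTypeOf_insert_le (hA : A.IsWF) (a : Γ) :
    orderTypeOf (insert a A) (hA.insert a) ≤ Order.succ (orderTypeOf A hA) := by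
  rw [← Ordinal.one_nadd, ← orderTypeOf_singleton a]
  exact orderTypeOf_union_le _ _

theorem add_orderTypeOf_le_union (hA : A.IsWF) (hB : B.IsWF) (h : ∀ a ∈ A, ∀ b ∈ B, a < b) :
    orderTypeOf A hA + orderTypeOf B hB ≤ orderTypeOf (A ∪ B) (hA.union hB) := by
  have : WellFoundedLT A := ⟨hA⟩
  have : WellFoundedLT B := ⟨hB⟩
  have : WellFoundedLT (A ∪ B : Set Γ) := ⟨hA.union hB⟩
  rw [orderTypeOf, orderTypeOf, ← Ordinal.type_sum_lex]
  refine Ordinal.type_le_iff'.2 ⟨RelEmbedding.ofMonotone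
    (Sum.elim (fun a => ⟨a.1, Or.inl a.2⟩) (fun b => ⟨b.1, Or.inr b.2⟩)) ?_⟩
  rintro (a₁ | b₁) (a₂ | b₂) hlt
  · exact (Sum.lex_inl_inl.1 hlt : a₁ < a₂)
  · exact h _ a₁.2 _ b₂.2
  · exact absurd hlt Sum.lex_inr_inl
  · exact (Sum.lex_inr_inr.1 hlt : b₁ < b₂)

theorem orderTypeOf_inter_Iio_add_orderTypeOf_inter_Ici_le (hA : A.IsWF) (x : Γ) :
    orderTypeOf (A ∩ Iio x) (hA.mono inter_subset_left) +
      orderTypeOf (A ∩ Ici x) (hA.mono inter_subset_left) ≤ orderTypeOf A hA := by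
  refine (add_orderTypeOf_le_union _ _ fun a ha b hb => ha.2.trans_le hb.2).trans_eq ?_
  rw [orderTypeOf_congr _ hA (by rw [← inter_union_distrib_left, Iio_union_Ici, inter_univ])]

theorem exists_union_eq_of_orderTypeOf_le_add (hA : A.IsWF) {γ δ : Ordinal}
    (h : orderTypeOf A hA ≤ γ + δ) :
    ∃ (A₁ A₂ : Set Γ) (h₁ : A₁.IsWF) (h₂ : A₂.IsWF), A = A₁ ∪ A₂ ∧
      orderTypeOf A₁ h₁ ≤ γ ∧ orderTypeOf A₂ h₂ ≤ δ := by
  rcases lt_or_ge γ (orderTypeOf A hA) with hγ | hγ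
  · obtain ⟨x, -, hxγ⟩ := exists_orderTypeOf_inter_Iio_eq hA hγ
    refine ⟨A ∩ Iio x, A ∩ Ici x, hA.mono inter_subset_left, hA.mono inter_subset_left,
      by rw [← inter_union_distrib_left, Iio_union_Ici, inter_univ], hxγ.le, ?_⟩
    have := (orderTypeOf_inter_Iio_add_orderTypeOf_inter_Ici_le hA x).trans h
    rwa [hxγ, add_le_add_iff_left] at this
  · exact ⟨A, ∅, hA, isWF_empty, (union_empty A).symm, hγ,
      orderTypeOf_empty.trans_le zero_le⟩

end OrderType

section Sumset

open Set Ordinal NaturalOps Pointwise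

variable {Γ : Type*} [AddCommMonoid Γ] [LinearOrder Γ] [IsOrderedCancelAddMonoid Γ]
  {A B C : Set Γ}

theorem Set.IsWF.nsmul (hC : C.IsWF) (n : ℕ) : (n • C).IsWF := by
  induction n with
  | zero => rw [zero_nsmul, ← singleton_zero]; exact isWF_singleton
  | succ n IH => simpa [succ_nsmul] using IH.add hC

theorem orderTypeOf_empty_add (hB : B.IsWF) : orderTypeOf (∅ + B) (isWF_empty.add hB) = 0 := by
  rw [orderTypeOf_congr _ isWF_empty empty_add, orderTypeOf_empty]

theorem orderTypeOf_add_lt_of_le_mul (hB : B.IsWF) {γ c : Ordinal} (hc : IsPrincipal (· ♯ ·) c)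
    (hc0 : 0 < c)
    (h : ∀ A' (hA' : A'.IsWF), orderTypeOf A' hA' ≤ γ →
      orderTypeOf (A' + B) (hA'.add hB) < c)
    (n : ℕ) (hA : A.IsWF) (hAn : orderTypeOf A hA ≤ γ * n) :
    orderTypeOf (A + B) (hA.add hB) < c := by
  induction n generalizing A with
  | zero =>
    rw [Nat.cast_zero, mul_zero, nonpos_iff_eq_zero, orderTypeOf_eq_zero_iff] at hAn
    subst hAn
    rwa [orderTypeOf_empty_add hB]
  | succ n IH =>
    rw [Nat.cast_succ, mul_add_one] at hAn
    obtain ⟨A₁, A₂, h₁, h₂, rfl, hA₁, hA₂⟩ :=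
      exists_union_eq_of_orderTypeOf_le_add hA hAn
    rw [orderTypeOf_congr _ ((h₁.add hB).union (h₂.add hB)) union_add]
    exact (orderTypeOf_union_le _ _).trans_lt (hc (IH h₁ hA₁) (h A₂ h₂ hA₂))

theorem orderTypeOf_add_lt_of_lt_omega0_opow (hB : B.IsWF) {e f : Ordinal}
    (IH : ∀ e' < e, ∀ A' (hA' : A'.IsWF), orderTypeOf A' hA' ≤ ω ^ e' →
      orderTypeOf (A' + B) (hA'.add hB) ≤ ω ^ (e' ♯ f))
    (hA : A.IsWF) (hAe : orderTypeOf A hA < ω ^ e) :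
    orderTypeOf (A + B) (hA.add hB) < ω ^ (e ♯ f) := by
  rcases eq_or_ne e 0 with rfl | he
  · rw [opow_zero, Order.lt_one_iff, orderTypeOf_eq_zero_iff] at hAe
    subst hAe
    rw [orderTypeOf_empty_add hB]
    exact opow_pos _ omega0_pos
  obtain ⟨e', he', n, hn⟩ := (lt_omega0_opow he).1 hAe
  refine orderTypeOf_add_lt_of_le_mul hB (isPrincipal_nadd_omega0_opow _) (opow_pos _ omega0_pos)
    (fun A' hA' h => (IH e' he' A' hA' h).trans_lt ?_) n hA hn.le
  exact (opow_lt_opow_iff_right one_lt_omega0).2 (nadd_lt_nadd_right he' f)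

theorem orderTypeOf_add_le_omega0_opow {e f : Ordinal} (hA : A.IsWF) (hB : B.IsWF)
    (hAe : orderTypeOf A hA ≤ ω ^ e) (hBf : orderTypeOf B hB ≤ ω ^ f) :
    orderTypeOf (A + B) (hA.add hB) ≤ ω ^ (e ♯ f) := by
  induction e using WellFoundedLT.induction generalizing A B f with
  | ind e IHe =>
  induction f using WellFoundedLT.induction generalizing A B with
  | ind f IHf =>
  refine orderTypeOf_le_of_forall_inter_Iio_lt _ ?_
  rintro _ ⟨a, ha, b, hb, rfl⟩
  have hA' : (A ∩ Iio a).IsWF := hA.mono inter_subset_left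
  have hB' : (B ∩ Iio b).IsWF := hB.mono inter_subset_left
  have hsub : (A + B) ∩ Iio (a + b) ⊆ (A ∩ Iio a + B) ∪ (A + B ∩ Iio b) := by
    rintro _ ⟨⟨c, hc, d, hd, rfl⟩, hcd⟩
    rcases lt_or_ge c a with hca | hac
    · exact Or.inl (add_mem_add ⟨hc, hca⟩ hd)
    · refine Or.inr (add_mem_add hc ⟨hd, lt_of_not_ge fun hbd => ?_⟩)
      exact hcd.not_ge (add_le_add hac hbd)
  have hleft : orderTypeOf (A ∩ Iio a + B) (hA'.add hB) < ω ^ (e ♯ f) :=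
    orderTypeOf_add_lt_of_lt_omega0_opow hB (fun e' he' A' hA' h => IHe e' he' hA' hB h hBf) hA'
      ((orderTypeOf_inter_Iio_lt hA ha).trans_le hAe)
  have hright : orderTypeOf (A + B ∩ Iio b) (hA.add hB') < ω ^ (e ♯ f) := by
    rw [orderTypeOf_congr _ (hB'.add hA) (add_comm _ _), nadd_comm]
    refine orderTypeOf_add_lt_of_lt_omega0_opow hA (fun f' hf' B' hB'' h => ?_) hB'
      ((orderTypeOf_inter_Iio_lt hB hb).trans_le hBf)
    rw [orderTypeOf_congr _ (hA.add hB'') (add_comm _ _), nadd_comm]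
    exact IHf f' hf' hA hB'' hAe h
  calc _ ≤ orderTypeOf (A ∩ Iio a + B ∪ (A + B ∩ Iio b))
          ((hA'.add hB).union (hA.add hB')) :=
        orderTypeOf_mono _ _ hsub
    _ ≤ _ := orderTypeOf_union_le _ _
    _ < ω ^ (e ♯ f) := isPrincipal_nadd_omega0_opow _ hleft hright

theorem orderTypeOf_nsmul_le (hC : C.IsWF) {u : Ordinal} (hCu : orderTypeOf C hC ≤ ω ^ u)
    (n : ℕ) : orderTypeOf (n • C) (hC.nsmul n) ≤ ω ^ (u ⨳ n) := by
  induction n with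
  | zero =>
    rw [orderTypeOf_congr _ isWF_singleton (by rw [zero_nsmul, singleton_zero]),
      orderTypeOf_singleton, Nat.cast_zero, nmul_zero, opow_zero]
  | succ n IH =>
    rw [orderTypeOf_congr _ ((hC.nsmul n).add hC) (succ_nsmul C n), Nat.cast_succ, nmul_add_one]
    exact orderTypeOf_add_le_omega0_opow _ _ IH hCu

end Sumset

section Closure

open Set Ordinal NaturalOps Pointwise

theorem Multiset.sum_mem_card_nsmul {M : Type*} [AddCommMonoid M] {C : Set M} {l : Multiset M}
    (hl : ∀ y ∈ l, y ∈ C) :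
    l.sum ∈ Multiset.card l • C := by
  induction l using Multiset.induction_on with
  | empty => simp
  | cons a l IH =>
    rw [Multiset.sum_cons, Multiset.card_cons, succ_nsmul, add_comm a]
    exact add_mem_add (IH fun y hy => hl y (Multiset.mem_cons_of_mem hy))
      (hl a (Multiset.mem_cons_self a l))

variable {Γ : Type*} [AddCommMonoid Γ] [LinearOrder Γ] {S : Set Γ}

theorem Set.IsWF.addSubmonoid_closure [IsOrderedCancelAddMonoid Γ] (hpos : ∀ x ∈ S, 0 ≤ x)
    (hS : S.IsWF) :
    (AddSubmonoid.closure S : Set Γ).IsWF :=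
  (hS.isPWO.addSubmonoid_closure hpos).isWF

theorem addSubmonoid_closure_inter_Iio_subset [IsOrderedAddMonoid Γ] (hpos : ∀ y ∈ S, 0 ≤ y)
    {s x : Γ} (hs : 0 ≤ s) {k : ℕ} (hx : x ≤ (k + 1) • s) :
    (AddSubmonoid.closure S : Set Γ) ∩ Iio x ⊆
      AddSubmonoid.closure (S ∩ Iio s) + k • insert 0 (S ∩ Ici s) := by
  rintro _ ⟨ht, htx⟩
  obtain ⟨l, hlS, rfl⟩ := AddSubmonoid.exists_multiset_of_mem_closure ht
  have hsplit := Multiset.filter_add_not (fun y => y < s) l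
  set l₁ := l.filter (fun y => y < s)
  set l₂ := l.filter (fun y => ¬ y < s)
  have hl₂ : ∀ y ∈ l₂, s ≤ y := fun y hy =>
    not_lt.1 (Multiset.of_mem_filter (p := fun y => ¬ y < s) hy)
  have hcard : Multiset.card l₂ ≤ k := by
    by_contra! hk
    have hl₁ : 0 ≤ l₁.sum :=
      Multiset.sum_nonneg fun y hy => hpos y (hlS y (Multiset.mem_of_mem_filter hy))
    refine htx.not_ge (hx.trans ?_)
    calc (k + 1) • s ≤ Multiset.card l₂ • s := nsmul_le_nsmul_left hs hk
      _ ≤ l₂.sum := Multiset.card_nsmul_le_sum hl₂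
      _ ≤ l₁.sum + l₂.sum := le_add_of_nonneg_left hl₁
      _ = l.sum := by rw [← Multiset.sum_add, hsplit]
  rw [← hsplit, Multiset.sum_add]
  refine add_mem_add (AddSubmonoid.multiset_sum_mem _ _ fun y hy => ?_)
    (nsmul_subset_nsmul_right (mem_insert 0 _) hcard (Multiset.sum_mem_card_nsmul fun y hy => ?_))
  · exact AddSubmonoid.subset_closure ⟨hlS y (Multiset.mem_of_mem_filter hy),
      Multiset.of_mem_filter (p := fun y => y < s) hy⟩
  · exact mem_insert_of_mem _ ⟨hlS y (Multiset.mem_of_mem_filter hy), hl₂ y hy⟩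

theorem orderTypeOf_addSubmonoid_closure_le [IsOrderedCancelAddMonoid Γ]
    (hpos : ∀ y ∈ S, 0 ≤ y) (hS : S.IsWF) :
    orderTypeOf (AddSubmonoid.closure S : Set Γ) (hS.addSubmonoid_closure hpos) ≤
      ω ^ (ω ⨳ orderTypeOf S hS) := by
  generalize hα : orderTypeOf S hS = α
  induction α using WellFoundedLT.induction generalizing S with
  | ind α IH =>
  refine orderTypeOf_le_of_forall_inter_Iio_lt _ fun x hx => ?_
  obtain ⟨l, hlS, rfl⟩ := AddSubmonoid.exists_multiset_of_mem_closure hx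
  rcases eq_or_ne l 0 with rfl | hl
  · have hempty : (AddSubmonoid.closure S : Set Γ) ∩ Iio (Multiset.sum 0) = ∅ :=
      eq_empty_of_forall_notMem fun y hy => hy.2.not_ge <| by
        simpa using (AddSubmonoid.closure_le (S := AddSubmonoid.nonneg Γ)).2 hpos hy.1
    rw [orderTypeOf_congr _ isWF_empty hempty, orderTypeOf_empty]
    exact opow_pos _ omega0_pos
  obtain ⟨s, hsl, hmax⟩ := Multiset.exists_max_image id hl
  obtain ⟨k, hk⟩ := Nat.exists_eq_add_one.2 (Multiset.card_pos.2 hl)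
  have hsS := hlS s hsl
  have hSlt : (S ∩ Iio s).IsWF := hS.mono inter_subset_left
  have hSge : (S ∩ Ici s).IsWF := hS.mono inter_subset_left
  set β := orderTypeOf (S ∩ Iio s) hSlt
  set τ := orderTypeOf (S ∩ Ici s) hSge
  have hβ : β < α := hα ▸ orderTypeOf_inter_Iio_lt hS hsS
  have hβτ : β + τ ≤ α := hα ▸ orderTypeOf_inter_Iio_add_orderTypeOf_inter_Ici_le hS s
  have hτ : τ ≠ 0 := fun h => ((orderTypeOf_eq_zero_iff _).1 h).subset ⟨hsS, le_rfl⟩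
  have hC : orderTypeOf _ (hSge.insert 0) ≤ ω ^ Order.succ τ :=
    (orderTypeOf_insert_le hSge 0).trans (right_le_opow _ one_lt_omega0)
  calc _ ≤ orderTypeOf _ ((hSlt.addSubmonoid_closure fun y hy => hpos y hy.1).add
          ((hSge.insert 0).nsmul k)) :=
        orderTypeOf_mono _ _ (addSubmonoid_closure_inter_Iio_subset hpos (hpos s hsS)
          (hk ▸ Multiset.sum_le_card_nsmul l s hmax))
    _ ≤ ω ^ (ω ⨳ β ♯ Order.succ τ ⨳ k) :=
        orderTypeOf_add_le_omega0_opow _ _ (IH β hβ (fun y hy => hpos y hy.1) hSlt rfl)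
          (orderTypeOf_nsmul_le _ hC k)
    _ < ω ^ (ω ⨳ α) :=
        (opow_lt_opow_iff_right one_lt_omega0).2 (omega0_nmul_nadd_succ_nmul_lt hτ hβτ k)

end Closure

open NaturalOps in
/-- The additive monoid generated by a well-ordered set of nonnegative elements of an
ordered abelian group is well-ordered, with order type at most `ω ^ (ω ⨳ α)` where `⨳`
is the natural (Hessenberg) product. -/
theorem closure_isWF_and_orderType_le {Γ : Type*} [AddCommGroup Γ] [LinearOrder Γ] [IsOrderedAddMonoid Γ]
    (S : Set Γ) (hpos : ∀ x ∈ S, 0 ≤ x) (hS : S.IsWF) (α : Ordinal)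
    (hα : orderTypeOf S hS = α) :
    ∃ h : ((AddSubmonoid.closure S : AddSubmonoid Γ) : Set Γ).IsWF,
      orderTypeOf ((AddSubmonoid.closure S : AddSubmonoid Γ) : Set Γ) h ≤
        Ordinal.omega0 ^ (Ordinal.omega0 ⨳ α) := by
  subst hα
  exact ⟨hS.addSubmonoid_closure hpos, orderTypeOf_addSubmonoid_closure_le hpos hS⟩

end
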